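/- arXiv:1809.00275 — 6 statements merged into one kernel-verified Lean document; each statement's English description precedes it below -/
import Mathlib

section
/- Let F ⊣ G be an adjunction of linear functors between linearly distributive categories, i.e., an adjunction in the 2-category of LDCs, linear functors, and linear transformations, so that (η⊗, ε⊗) : F⊗ ⊣ G⊗ is a monoidal adjunction and (ε⊕, η⊕) : G⊕ ⊣ F⊕ is a comonoidal adjunction. Then F⊗ is strong monoidal with respect to ⊗ (its laxors m⊗, m⊤ are isomorphisms) and F⊕ is strong comonoidal with respect to ⊕ (its colaxors n⊕, n⊥ are isomorphisms), so F is a strong linear functor. -/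
open CategoryTheory

universe v u v₂ u₂ v₃ u₃

/-- A linearly distributive category (LDC): a category with two monoidal structures
`T = (⊗, ⊤)` (tensor) and `P = (⊕, ⊥)` (par), linked by natural linear distributors
`∂L : A ⊗ (B ⊕ X) ⟶ (A ⊗ B) ⊕ X` and `∂R : (A ⊕ B) ⊗ X ⟶ A ⊕ (B ⊗ X)`
(satisfying the Cockett–Seely coherence conditions). -/
structure LDC (C : Type u) [Category.{v} C] where
  T : MonoidalCategory C
  P : MonoidalCategory C
  distL : ∀ A B X : C, T.tensorObj A (P.tensorObj B X) ⟶ P.tensorObj (T.tensorObj A B) X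
  distR : ∀ A B X : C, T.tensorObj (P.tensorObj A B) X ⟶ P.tensorObj A (T.tensorObj B X)
  distL_natural : ∀ {A A' B B' X X' : C} (f : A ⟶ A') (g : B ⟶ B') (h : X ⟶ X'),
    T.tensorHom f (P.tensorHom g h) ≫ distL A' B' X'
      = distL A B X ≫ P.tensorHom (T.tensorHom f g) h
  distR_natural : ∀ {A A' B B' X X' : C} (f : A ⟶ A') (g : B ⟶ B') (h : X ⟶ X'),
    T.tensorHom (P.tensorHom f g) h ≫ distR A' B' X'
      = distR A B X ≫ P.tensorHom f (T.tensorHom g h)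

namespace LDC

variable {C : Type u} [Category.{v} C]

/-- tensor on objects -/
abbrev ot (L : LDC C) (A B : C) : C := L.T.tensorObj A B
/-- par on objects -/
abbrev op (L : LDC C) (A B : C) : C := L.P.tensorObj A B
/-- tensor unit ⊤ -/
abbrev tu (L : LDC C) : C := L.T.tensorUnit
/-- par unit ⊥ -/
abbrev pu (L : LDC C) : C := L.P.tensorUnit
/-- tensor on morphisms -/
abbrev oth (L : LDC C) {A B A' B' : C} (f : A ⟶ A') (g : B ⟶ B') :
    L.ot A B ⟶ L.ot A' B' := L.T.tensorHom f g
/-- par on morphisms -/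
abbrev oph (L : LDC C) {A B A' B' : C} (f : A ⟶ A') (g : B ⟶ B') :
    L.op A B ⟶ L.op A' B' := L.P.tensorHom f g
/-- associator of the tensor -/
abbrev aT (L : LDC C) (A B X : C) : L.ot (L.ot A B) X ≅ L.ot A (L.ot B X) := L.T.associator A B X
/-- associator of the par -/
abbrev aP (L : LDC C) (A B X : C) : L.op (L.op A B) X ≅ L.op A (L.op B X) := L.P.associator A B X
/-- left unitor of the tensor -/
abbrev luT (L : LDC C) (A : C) : L.ot L.tu A ≅ A := L.T.leftUnitor A
/-- right unitor of the tensor -/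
abbrev ruT (L : LDC C) (A : C) : L.ot A L.tu ≅ A := L.T.rightUnitor A
/-- left unitor of the par -/
abbrev luP (L : LDC C) (A : C) : L.op L.pu A ≅ A := L.P.leftUnitor A
/-- right unitor of the par -/
abbrev ruP (L : LDC C) (A : C) : L.op A L.pu ≅ A := L.P.rightUnitor A

end LDC

section LinearFunctor

variable {C : Type u} [Category.{v} C] {D : Type u₂} [Category.{v₂} D]

/-- The data of a linear functor between LDCs: a pair of functors `Ft` (tensor part,
lax `⊗`-monoidal via `mT, mU`) and `Fp` (par part, `⊕`-comonoidal via `nP, nU`), together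
with the four linear strengths `vtR, vtL, vpR, vpL`. -/
structure LinearFunctorData (X : LDC C) (Y : LDC D) where
  Ft : C ⥤ D
  Fp : C ⥤ D
  mT : ∀ A B : C, Y.ot (Ft.obj A) (Ft.obj B) ⟶ Ft.obj (X.ot A B)
  mU : Y.tu ⟶ Ft.obj X.tu
  nP : ∀ A B : C, Fp.obj (X.op A B) ⟶ Y.op (Fp.obj A) (Fp.obj B)
  nU : Fp.obj X.pu ⟶ Y.pu
  vtR : ∀ A B : C, Ft.obj (X.op A B) ⟶ Y.op (Fp.obj A) (Ft.obj B)
  vtL : ∀ A B : C, Ft.obj (X.op A B) ⟶ Y.op (Ft.obj A) (Fp.obj B)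
  vpR : ∀ A B : C, Y.ot (Ft.obj A) (Fp.obj B) ⟶ Fp.obj (X.ot A B)
  vpL : ∀ A B : C, Y.ot (Fp.obj A) (Ft.obj B) ⟶ Fp.obj (X.ot A B)

/-- The coherence laws of a linear functor: naturality of all the structure maps,
lax monoidality of `(Ft, mT, mU)`, comonoidality of `(Fp, nP, nU)`, and the
Cockett–Seely coherences [LF.1]–[LF.5]. -/
structure LinearFunctorLaws {X : LDC C} {Y : LDC D} (F : LinearFunctorData X Y) : Prop where
  mT_natural : ∀ {A A' B B' : C} (f : A ⟶ A') (g : B ⟶ B'),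
    Y.oth (F.Ft.map f) (F.Ft.map g) ≫ F.mT A' B' = F.mT A B ≫ F.Ft.map (X.oth f g)
  mT_assoc : ∀ A B Cc : C,
    Y.oth (F.mT A B) (𝟙 (F.Ft.obj Cc)) ≫ F.mT (X.ot A B) Cc ≫ F.Ft.map (X.aT A B Cc).hom
      = (Y.aT (F.Ft.obj A) (F.Ft.obj B) (F.Ft.obj Cc)).hom
          ≫ Y.oth (𝟙 (F.Ft.obj A)) (F.mT B Cc) ≫ F.mT A (X.ot B Cc)
  mT_lu : ∀ A : C,
    Y.oth F.mU (𝟙 (F.Ft.obj A)) ≫ F.mT X.tu A ≫ F.Ft.map (X.luT A).hom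
      = (Y.luT (F.Ft.obj A)).hom
  mT_ru : ∀ A : C,
    Y.oth (𝟙 (F.Ft.obj A)) F.mU ≫ F.mT A X.tu ≫ F.Ft.map (X.ruT A).hom
      = (Y.ruT (F.Ft.obj A)).hom
  nP_natural : ∀ {A A' B B' : C} (f : A ⟶ A') (g : B ⟶ B'),
    F.Fp.map (X.oph f g) ≫ F.nP A' B' = F.nP A B ≫ Y.oph (F.Fp.map f) (F.Fp.map g)
  nP_assoc : ∀ A B Cc : C,
    F.nP (X.op A B) Cc ≫ Y.oph (F.nP A B) (𝟙 (F.Fp.obj Cc))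
        ≫ (Y.aP (F.Fp.obj A) (F.Fp.obj B) (F.Fp.obj Cc)).hom
      = F.Fp.map (X.aP A B Cc).hom ≫ F.nP A (X.op B Cc) ≫ Y.oph (𝟙 (F.Fp.obj A)) (F.nP B Cc)
  nP_lu : ∀ A : C,
    F.Fp.map (X.luP A).hom
      = F.nP X.pu A ≫ Y.oph F.nU (𝟙 (F.Fp.obj A)) ≫ (Y.luP (F.Fp.obj A)).hom
  nP_ru : ∀ A : C,
    F.Fp.map (X.ruP A).hom
      = F.nP A X.pu ≫ Y.oph (𝟙 (F.Fp.obj A)) F.nU ≫ (Y.ruP (F.Fp.obj A)).hom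
  vtR_natural : ∀ {A A' B B' : C} (f : A ⟶ A') (g : B ⟶ B'),
    F.Ft.map (X.oph f g) ≫ F.vtR A' B' = F.vtR A B ≫ Y.oph (F.Fp.map f) (F.Ft.map g)
  vtL_natural : ∀ {A A' B B' : C} (f : A ⟶ A') (g : B ⟶ B'),
    F.Ft.map (X.oph f g) ≫ F.vtL A' B' = F.vtL A B ≫ Y.oph (F.Ft.map f) (F.Fp.map g)
  vpR_natural : ∀ {A A' B B' : C} (f : A ⟶ A') (g : B ⟶ B'),
    Y.oth (F.Ft.map f) (F.Fp.map g) ≫ F.vpR A' B' = F.vpR A B ≫ F.Fp.map (X.oth f g)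
  vpL_natural : ∀ {A A' B B' : C} (f : A ⟶ A') (g : B ⟶ B'),
    Y.oth (F.Fp.map f) (F.Ft.map g) ≫ F.vpL A' B' = F.vpL A B ≫ F.Fp.map (X.oth f g)
  lf1a : ∀ A : C,
    F.Ft.map (X.luP A).hom
      = F.vtR X.pu A ≫ Y.oph F.nU (𝟙 (F.Ft.obj A)) ≫ (Y.luP (F.Ft.obj A)).hom
  lf1b : ∀ A : C,
    F.Ft.map (X.ruP A).hom
      = F.vtL A X.pu ≫ Y.oph (𝟙 (F.Ft.obj A)) F.nU ≫ (Y.ruP (F.Ft.obj A)).hom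
  lf1c : ∀ A : C,
    (Y.luT (F.Fp.obj A)).inv ≫ Y.oth F.mU (𝟙 (F.Fp.obj A)) ≫ F.vpR X.tu A
      = F.Fp.map (X.luT A).inv
  lf1d : ∀ A : C,
    (Y.ruT (F.Fp.obj A)).inv ≫ Y.oth (𝟙 (F.Fp.obj A)) F.mU ≫ F.vpL A X.tu
      = F.Fp.map (X.ruT A).inv
  lf2a : ∀ A B Cc : C,
    F.Ft.map (X.aP A B Cc).hom ≫ F.vtR A (X.op B Cc) ≫ Y.oph (𝟙 (F.Fp.obj A)) (F.vtR B Cc)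
      = F.vtR (X.op A B) Cc ≫ Y.oph (F.nP A B) (𝟙 (F.Ft.obj Cc))
          ≫ (Y.aP (F.Fp.obj A) (F.Fp.obj B) (F.Ft.obj Cc)).hom
  lf2b : ∀ A B Cc : C,
    F.Ft.map (X.aP A B Cc).hom ≫ F.vtL A (X.op B Cc) ≫ Y.oph (𝟙 (F.Ft.obj A)) (F.nP B Cc)
      = F.vtL (X.op A B) Cc ≫ Y.oph (F.vtL A B) (𝟙 (F.Fp.obj Cc))
          ≫ (Y.aP (F.Ft.obj A) (F.Fp.obj B) (F.Fp.obj Cc)).hom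
  lf2c : ∀ A B Cc : C,
    Y.oth (F.mT A B) (𝟙 (F.Fp.obj Cc)) ≫ F.vpR (X.ot A B) Cc ≫ F.Fp.map (X.aT A B Cc).hom
      = (Y.aT (F.Ft.obj A) (F.Ft.obj B) (F.Fp.obj Cc)).hom
          ≫ Y.oth (𝟙 (F.Ft.obj A)) (F.vpR B Cc) ≫ F.vpR A (X.ot B Cc)
  lf2d : ∀ A B Cc : C,
    Y.oth (F.vpL A B) (𝟙 (F.Ft.obj Cc)) ≫ F.vpL (X.ot A B) Cc ≫ F.Fp.map (X.aT A B Cc).hom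
      = (Y.aT (F.Fp.obj A) (F.Ft.obj B) (F.Ft.obj Cc)).hom
          ≫ Y.oth (𝟙 (F.Fp.obj A)) (F.mT B Cc) ≫ F.vpL A (X.ot B Cc)
  lf3a : ∀ A B Cc : C,
    F.Ft.map (X.aP A B Cc).hom ≫ F.vtR A (X.op B Cc) ≫ Y.oph (𝟙 (F.Fp.obj A)) (F.vtL B Cc)
      = F.vtL (X.op A B) Cc ≫ Y.oph (F.vtR A B) (𝟙 (F.Fp.obj Cc))
          ≫ (Y.aP (F.Fp.obj A) (F.Ft.obj B) (F.Fp.obj Cc)).hom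
  lf3b : ∀ A B Cc : C,
    Y.oth (F.vpR A B) (𝟙 (F.Ft.obj Cc)) ≫ F.vpL (X.ot A B) Cc ≫ F.Fp.map (X.aT A B Cc).hom
      = (Y.aT (F.Ft.obj A) (F.Fp.obj B) (F.Ft.obj Cc)).hom
          ≫ Y.oth (𝟙 (F.Ft.obj A)) (F.vpL B Cc) ≫ F.vpR A (X.ot B Cc)
  lf4a : ∀ A B Cc : C,
    Y.oth (𝟙 (F.Ft.obj A)) (F.vtR B Cc)
        ≫ Y.distL (F.Ft.obj A) (F.Fp.obj B) (F.Ft.obj Cc)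
        ≫ Y.oph (F.vpR A B) (𝟙 (F.Ft.obj Cc))
      = F.mT A (X.op B Cc) ≫ F.Ft.map (X.distL A B Cc) ≫ F.vtR (X.ot A B) Cc
  lf4b : ∀ A B Cc : C,
    Y.oth (F.vtL A B) (𝟙 (F.Ft.obj Cc))
        ≫ Y.distR (F.Ft.obj A) (F.Fp.obj B) (F.Ft.obj Cc)
        ≫ Y.oph (𝟙 (F.Ft.obj A)) (F.vpL B Cc)
      = F.mT (X.op A B) Cc ≫ F.Ft.map (X.distR A B Cc) ≫ F.vtL A (X.ot B Cc)
  lf4c : ∀ A B Cc : C,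
    Y.oth (𝟙 (F.Fp.obj A)) (F.vtL B Cc)
        ≫ Y.distL (F.Fp.obj A) (F.Ft.obj B) (F.Fp.obj Cc)
        ≫ Y.oph (F.vpL A B) (𝟙 (F.Fp.obj Cc))
      = F.vpL A (X.op B Cc) ≫ F.Fp.map (X.distL A B Cc) ≫ F.nP (X.ot A B) Cc
  lf4d : ∀ A B Cc : C,
    Y.oth (F.vtR A B) (𝟙 (F.Fp.obj Cc))
        ≫ Y.distR (F.Fp.obj A) (F.Ft.obj B) (F.Fp.obj Cc)
        ≫ Y.oph (𝟙 (F.Fp.obj A)) (F.vpR B Cc)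
      = F.vpR (X.op A B) Cc ≫ F.Fp.map (X.distR A B Cc) ≫ F.nP A (X.ot B Cc)
  lf5a : ∀ A B Cc : C,
    Y.oth (𝟙 (F.Ft.obj A)) (F.vtL B Cc)
        ≫ Y.distL (F.Ft.obj A) (F.Ft.obj B) (F.Fp.obj Cc)
        ≫ Y.oph (F.mT A B) (𝟙 (F.Fp.obj Cc))
      = F.mT A (X.op B Cc) ≫ F.Ft.map (X.distL A B Cc) ≫ F.vtL (X.ot A B) Cc
  lf5b : ∀ A B Cc : C,
    Y.oth (F.vtR A B) (𝟙 (F.Ft.obj Cc))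
        ≫ Y.distR (F.Fp.obj A) (F.Ft.obj B) (F.Ft.obj Cc)
        ≫ Y.oph (𝟙 (F.Fp.obj A)) (F.mT B Cc)
      = F.mT (X.op A B) Cc ≫ F.Ft.map (X.distR A B Cc) ≫ F.vtR A (X.ot B Cc)
  lf5c : ∀ A B Cc : C,
    Y.oth (𝟙 (F.Ft.obj A)) (F.nP B Cc)
        ≫ Y.distL (F.Ft.obj A) (F.Fp.obj B) (F.Fp.obj Cc)
        ≫ Y.oph (F.vpR A B) (𝟙 (F.Fp.obj Cc))
      = F.vpR A (X.op B Cc) ≫ F.Fp.map (X.distL A B Cc) ≫ F.nP (X.ot A B) Cc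
  lf5d : ∀ A B Cc : C,
    Y.oth (F.nP A B) (𝟙 (F.Ft.obj Cc))
        ≫ Y.distR (F.Fp.obj A) (F.Fp.obj B) (F.Ft.obj Cc)
        ≫ Y.oph (𝟙 (F.Fp.obj A)) (F.vpL B Cc)
      = F.vpL (X.op A B) Cc ≫ F.Fp.map (X.distR A B Cc) ≫ F.nP A (X.ot B Cc)

/-- A linear functor between LDCs. -/
structure LinearFunctor (X : LDC C) (Y : LDC D) extends LinearFunctorData X Y where
  laws : LinearFunctorLaws toLinearFunctorData

end LinearFunctor

/-!
For an adjunction `(η, ε) : L ⊣ R`, a map `f : A ⟶ L B` is invertible as soon as some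
`g : B ⟶ R A` satisfies `η_B = g ≫ R f` (then `L g ≫ ε_A` is a left inverse of `f` by the triangle
identity) and `f ≫ L g ≫ ε_A = 𝟙`. For `F⊗ ⊣ G⊗` take `g = (η ⊗ η) ≫ m⊗_G` for `m⊗` and
`g = m⊤_G` for `m⊤`: the first condition is monoidality of `η`, the second follows from
monoidality of `ε`, naturality of `m⊗` and the triangle identity. The colaxors of `F⊕` are handled
dually through the comonoidal adjunction `G⊕ ⊣ F⊕`.
-/

namespace CategoryTheory.Adjunction

variable {C : Type u} [Category.{v} C] {D : Type u₂} [Category.{v₂} D] {L : C ⥤ D} {R : D ⥤ C}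

theorem isIso_of_unit_app_eq_comp (adj : L ⊣ R) {A : D} {B : C} (f : A ⟶ L.obj B)
    (g : B ⟶ R.obj A) (hunit : adj.unit.app B = g ≫ R.map f)
    (hcounit : f ≫ L.map g ≫ adj.counit.app A = 𝟙 A) : IsIso f :=
  ⟨L.map g ≫ adj.counit.app A, hcounit, by
    rw [Category.assoc, ← adj.counit_naturality, ← Category.assoc, ← L.map_comp, ← hunit,
      adj.left_triangle_components]⟩

theorem isIso_of_counit_app_eq_comp (adj : L ⊣ R) {A : C} {B : D} (f : R.obj B ⟶ A)
    (g : L.obj A ⟶ B) (hcounit : adj.counit.app B = L.map f ≫ g)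
    (hunit : adj.unit.app A ≫ R.map g ≫ f = 𝟙 A) : IsIso f :=
  ⟨adj.unit.app A ≫ R.map g, by
    rw [← Category.assoc, ← adj.unit_naturality, Category.assoc, ← R.map_comp, ← hcounit,
      adj.right_triangle_components], by rw [Category.assoc, hunit]⟩

end CategoryTheory.Adjunction

namespace LinearFunctor

variable {C : Type u} [Category.{v} C] {D : Type u₂} [Category.{v₂} D] {X : LDC C} {Y : LDC D}

theorem mT_comp_map_comp_counit (F : LinearFunctor X Y) (G : LinearFunctorData Y X)
    (adj : F.Ft ⊣ G.Ft)
    (counit_tensor : ∀ A B : D,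
      F.mT (G.Ft.obj A) (G.Ft.obj B) ≫ F.Ft.map (G.mT A B) ≫ adj.counit.app (Y.ot A B)
        = Y.oth (adj.counit.app A) (adj.counit.app B))
    (A B : C) :
    F.mT A B ≫ F.Ft.map (X.oth (adj.unit.app A) (adj.unit.app B)
        ≫ G.mT (F.Ft.obj A) (F.Ft.obj B)) ≫ adj.counit.app (Y.ot (F.Ft.obj A) (F.Ft.obj B))
      = 𝟙 _ := by
  have nat := F.laws.mT_natural (adj.unit.app A) (adj.unit.app B)
  simp only [Functor.comp_obj, Functor.id_obj] at nat
  calc _ = Y.oth (F.Ft.map (adj.unit.app A)) (F.Ft.map (adj.unit.app B))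
          ≫ F.mT (G.Ft.obj (F.Ft.obj A)) (G.Ft.obj (F.Ft.obj B))
          ≫ F.Ft.map (G.mT _ _) ≫ adj.counit.app _ := by
        rw [F.Ft.map_comp, Category.assoc, ← reassoc_of% nat]
    _ = Y.oth (F.Ft.map (adj.unit.app A) ≫ adj.counit.app _)
          (F.Ft.map (adj.unit.app B) ≫ adj.counit.app _) := by
        rw [counit_tensor, Y.T.tensorHom_comp_tensorHom]
    _ = 𝟙 _ := by
        simp only [Functor.id_obj, adj.left_triangle_components]
        exact Y.T.id_tensorHom_id _ _

theorem unit_comp_map_comp_nP (F : LinearFunctor X Y) (G : LinearFunctorData Y X)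
    (adj : G.Fp ⊣ F.Fp)
    (unit_tensor : ∀ A B : D,
      adj.unit.app (Y.op A B) ≫ F.Fp.map (G.nP A B) ≫ F.nP (G.Fp.obj A) (G.Fp.obj B)
        = Y.oph (adj.unit.app A) (adj.unit.app B))
    (A B : C) :
    adj.unit.app (Y.op (F.Fp.obj A) (F.Fp.obj B)) ≫ F.Fp.map (G.nP (F.Fp.obj A) (F.Fp.obj B)
        ≫ X.oph (adj.counit.app A) (adj.counit.app B)) ≫ F.nP A B
      = 𝟙 _ := by
  have nat := F.laws.nP_natural (adj.counit.app A) (adj.counit.app B)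
  simp only [Functor.comp_obj, Functor.id_obj] at nat
  calc _ = adj.unit.app _ ≫ F.Fp.map (G.nP _ _)
          ≫ F.nP (G.Fp.obj (F.Fp.obj A)) (G.Fp.obj (F.Fp.obj B))
          ≫ Y.oph (F.Fp.map (adj.counit.app A)) (F.Fp.map (adj.counit.app B)) := by
        rw [F.Fp.map_comp, Category.assoc, nat]
    _ = Y.oph (adj.unit.app _ ≫ F.Fp.map (adj.counit.app A))
          (adj.unit.app _ ≫ F.Fp.map (adj.counit.app B)) := by
        rw [reassoc_of% unit_tensor, Y.P.tensorHom_comp_tensorHom]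
    _ = 𝟙 _ := by
        simp only [Functor.id_obj, adj.right_triangle_components]
        exact Y.P.id_tensorHom_id _ _

end LinearFunctor

theorem adjunction_of_linear_functors_is_strong
    {C : Type u} [Category.{v} C] {D : Type u₂} [Category.{v₂} D]
    {X : LDC C} {Y : LDC D}
    (F : LinearFunctor X Y) (G : LinearFunctor Y X)
    -- the tensor parts form an adjunction `F⊗ ⊣ G⊗` ...
    (adjT : F.Ft ⊣ G.Ft)
    -- ... which is a monoidal adjunction (unit and counit are monoidal transformations)
    (unitT_tensor : ∀ A B : C,
      adjT.unit.app (X.ot A B)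
        = X.oth (adjT.unit.app A) (adjT.unit.app B) ≫ G.mT (F.Ft.obj A) (F.Ft.obj B)
            ≫ G.Ft.map (F.mT A B))
    (unitT_unit : adjT.unit.app X.tu = G.mU ≫ G.Ft.map F.mU)
    (counitT_tensor : ∀ A B : D,
      F.mT (G.Ft.obj A) (G.Ft.obj B) ≫ F.Ft.map (G.mT A B) ≫ adjT.counit.app (Y.ot A B)
        = Y.oth (adjT.counit.app A) (adjT.counit.app B))
    (counitT_unit : F.mU ≫ F.Ft.map G.mU ≫ adjT.counit.app Y.tu = 𝟙 Y.tu)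
    -- the par parts form an adjunction `G⊕ ⊣ F⊕` ...
    (adjP : G.Fp ⊣ F.Fp)
    -- ... which is a comonoidal adjunction (unit and counit are comonoidal transformations)
    (unitP_tensor : ∀ A B : D,
      adjP.unit.app (Y.op A B) ≫ F.Fp.map (G.nP A B) ≫ F.nP (G.Fp.obj A) (G.Fp.obj B)
        = Y.oph (adjP.unit.app A) (adjP.unit.app B))
    (unitP_unit : adjP.unit.app Y.pu ≫ F.Fp.map G.nU ≫ F.nU = 𝟙 Y.pu)
    (counitP_tensor : ∀ A B : C,
      adjP.counit.app (X.op A B)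
        = G.Fp.map (F.nP A B) ≫ G.nP (F.Fp.obj A) (F.Fp.obj B)
            ≫ X.oph (adjP.counit.app A) (adjP.counit.app B))
    (counitP_unit : adjP.counit.app X.pu = G.Fp.map F.nU ≫ G.nU) :
    (∀ A B : C, IsIso (F.mT A B)) ∧ IsIso F.mU ∧
      (∀ A B : C, IsIso (F.nP A B)) ∧ IsIso F.nU := by
  refine ⟨fun A B => ?_, ?_, fun A B => ?_, ?_⟩
  · refine adjT.isIso_of_unit_app_eq_comp (F.mT A B)
      (X.oth (adjT.unit.app A) (adjT.unit.app B) ≫ G.mT (F.Ft.obj A) (F.Ft.obj B))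
      (by rw [unitT_tensor, Category.assoc]) ?_
    exact F.mT_comp_map_comp_counit G.toLinearFunctorData adjT counitT_tensor A B
  · exact adjT.isIso_of_unit_app_eq_comp F.mU G.mU unitT_unit counitT_unit
  · refine adjP.isIso_of_counit_app_eq_comp (F.nP A B)
      (G.nP (F.Fp.obj A) (F.Fp.obj B) ≫ X.oph (adjP.counit.app A) (adjP.counit.app B))
      (counitP_tensor A B) ?_
    exact F.unit_comp_map_comp_nP G.toLinearFunctorData adjP unitP_tensor A B
  · exact adjP.isIso_of_counit_app_eq_comp F.nU G.nU counitP_unit unitP_unit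
end

section
/- Linear functors preserve linear duals: if F : X → Y is a linear functor between LDCs and (η, ε) : A ⊣⊣ B is a linear dual in X, then F⊗(A) ⊣⊣ F⊕(B) in Y, with unit η' := m⊤ ; F⊗(η) ; ν⊗ᴸ : ⊤ → F⊗(A) ⊕ F⊕(B) and counit ε' := ν⊕ᴸ ; F⊕(ε) ; n⊥ : F⊕(B) ⊗ F⊗(A) → ⊥; similarly F⊕(A) ⊣⊣ F⊗(B). -/
open CategoryTheory

universe v u v₂ u₂ v₃ u₃

section Mix

variable {C : Type u} [Category.{v} C] {D : Type u₂} [Category.{v₂} D]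

/-- A mix category: an LDC with a mix map `m : ⊥ ⟶ ⊤` such that the two canonical
composites `A ⊗ B ⟶ A ⊕ B` (via the unitors, `m`, and the two linear distributors)
coincide. -/
structure MixCat (C : Type u) [Category.{v} C] where
  X : LDC C
  mix : X.pu ⟶ X.tu
  mix_coh : ∀ A B : C,
    X.oth (𝟙 A) ((X.luP B).inv ≫ X.oph mix (𝟙 B)) ≫ X.distL A X.tu B
        ≫ X.oph (X.ruT A).hom (𝟙 B)
      = X.oth ((X.ruP A).inv) (𝟙 B) ≫ X.distR A X.pu B
        ≫ X.oph (𝟙 A) (X.oth mix (𝟙 B) ≫ (X.luT B).hom)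

/-- The mixor `mx : A ⊗ B ⟶ A ⊕ B` of a mix category. -/
def MixCat.mx (M : MixCat C) (A B : C) : M.X.ot A B ⟶ M.X.op A B :=
  M.X.oth (𝟙 A) ((M.X.luP B).inv ≫ M.X.oph M.mix (𝟙 B)) ≫ M.X.distL A M.X.tu B
    ≫ M.X.oph (M.X.ruT A).hom (𝟙 B)

/-- An object is in the core of a mix category when all mixors out of it and into it
are isomorphisms. -/
def MixCat.inCore (M : MixCat C) (U : C) : Prop :=
  (∀ B : C, IsIso (M.mx U B)) ∧ (∀ B : C, IsIso (M.mx B U))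

/-- An isomix category: a mix category whose mix map is an isomorphism
(with specified inverse). -/
structure IsomixCat (C : Type u) [Category.{v} C] extends MixCat C where
  mixInv : X.tu ⟶ X.pu
  mix_mixInv : mix ≫ mixInv = 𝟙 X.pu
  mixInv_mix : mixInv ≫ mix = 𝟙 X.tu

/-- A Frobenius (linear) functor between LDCs: a linear functor whose tensor and par
parts coincide (`Ft = Fp = F`), with `m⊗ = ν⊕ᴸ = ν⊕ᴿ` and `n⊕ = ν⊗ᴸ = ν⊗ᴿ`. -/
structure FrobFunctor (X : LDC C) (Y : LDC D) where
  F : C ⥤ D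
  mT : ∀ A B : C, Y.ot (F.obj A) (F.obj B) ⟶ F.obj (X.ot A B)
  mU : Y.tu ⟶ F.obj X.tu
  nP : ∀ A B : C, F.obj (X.op A B) ⟶ Y.op (F.obj A) (F.obj B)
  nU : F.obj X.pu ⟶ Y.pu
  laws : LinearFunctorLaws (X := X) (Y := Y) ⟨F, F, mT, mU, nP, nU, nP, nP, mT, mT⟩

/-- The linear-functor data underlying a Frobenius functor. -/
def FrobFunctor.data {X : LDC C} {Y : LDC D} (G : FrobFunctor X Y) : LinearFunctorData X Y :=
  ⟨G.F, G.F, G.mT, G.mU, G.nP, G.nU, G.nP, G.nP, G.mT, G.mT⟩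

/-- A mix functor between mix categories: a Frobenius functor satisfying
`n⊥ ; m ; m⊤ = F(m)` ([mix-FF]). -/
def IsMixFunctor {M : MixCat C} {N : MixCat D} (G : FrobFunctor M.X N.X) : Prop :=
  G.nU ≫ N.mix ≫ G.mU = G.F.map M.mix

/-- The isomix condition [isomix-FF] on a Frobenius functor between isomix categories:
`m⊤ ; F(m⁻¹) ; n⊥ = m⁻¹`. -/
def IsIsomixFunctor {M : IsomixCat C} {N : IsomixCat D}
    (G : FrobFunctor M.X N.X) : Prop :=
  G.mU ≫ G.F.map M.mixInv ≫ G.nU = N.mixInv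

/-- A linear transformation `α : F ⇒ G` between (the data of) linear functors: a
monoidal transformation `α⊗ : F⊗ ⇒ G⊗` and a comonoidal transformation
`α⊕ : G⊕ ⇒ F⊕` satisfying [LT.1]–[LT.4]. -/
structure LinearTransf {X : LDC C} {Y : LDC D} (F G : LinearFunctorData X Y) where
  aT : ∀ A : C, F.Ft.obj A ⟶ G.Ft.obj A
  aT_natural : ∀ {A B : C} (f : A ⟶ B), F.Ft.map f ≫ aT B = aT A ≫ G.Ft.map f
  aP : ∀ A : C, G.Fp.obj A ⟶ F.Fp.obj A
  aP_natural : ∀ {A B : C} (f : A ⟶ B), G.Fp.map f ≫ aP B = aP A ≫ F.Fp.map f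
  aT_tensor : ∀ A B : C,
    Y.oth (aT A) (aT B) ≫ G.mT A B = F.mT A B ≫ aT (X.ot A B)
  aT_unit : F.mU ≫ aT X.tu = G.mU
  aP_cotensor : ∀ A B : C,
    aP (X.op A B) ≫ F.nP A B = G.nP A B ≫ Y.oph (aP A) (aP B)
  aP_counit : aP X.pu ≫ F.nU = G.nU
  lt1 : ∀ A B : C,
    aT (X.op A B) ≫ G.vtR A B ≫ Y.oph (aP A) (𝟙 (G.Ft.obj B))
      = F.vtR A B ≫ Y.oph (𝟙 (F.Fp.obj A)) (aT B)
  lt2 : ∀ A B : C,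
    aT (X.op A B) ≫ G.vtL A B ≫ Y.oph (𝟙 (G.Ft.obj A)) (aP B)
      = F.vtL A B ≫ Y.oph (aT A) (𝟙 (F.Fp.obj B))
  lt3 : ∀ A B : C,
    Y.oth (𝟙 (G.Fp.obj A)) (aT B) ≫ G.vpL A B ≫ aP (X.ot A B)
      = Y.oth (aP A) (𝟙 (F.Ft.obj B)) ≫ F.vpL A B
  lt4 : ∀ A B : C,
    Y.oth (aT A) (𝟙 (G.Fp.obj B)) ≫ G.vpR A B ≫ aP (X.ot A B)
      = Y.oth (𝟙 (F.Ft.obj A)) (aP B) ≫ F.vpR A B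

/-- `(η, ε) : A ⊣⊣ B` is a linear dual in an LDC: `η : ⊤ ⟶ A ⊕ B` and
`ε : B ⊗ A ⟶ ⊥` satisfy the two snake identities. -/
def IsLinearDual (X : LDC C) (A B : C) (η : X.tu ⟶ X.op A B) (ε : X.ot B A ⟶ X.pu) : Prop :=
  ((X.luT A).inv ≫ X.oth η (𝟙 A) ≫ X.distR A B A ≫ X.oph (𝟙 A) ε ≫ (X.ruP A).hom = 𝟙 A) ∧
  ((X.ruT B).inv ≫ X.oth (𝟙 B) η ≫ X.distL B A B ≫ X.oph ε (𝟙 B) ≫ (X.luP B).hom = 𝟙 B)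

/-- The degenerate LDC on a single monoidal structure (tensor = par), with the
associator isomorphisms as linear distributors. -/
def LDC.deg (Mo : MonoidalCategory C) : LDC C where
  T := Mo
  P := Mo
  distL A B X := (Mo.associator A B X).inv
  distR A B X := (Mo.associator A B X).hom
  distL_natural := by
    intro A A' B B' X X' f g h
    rw [Iso.comp_inv_eq, Category.assoc, Mo.associator_naturality, Iso.inv_hom_id_assoc]
  distR_natural := by
    intro A A' B B' X X' f g h
    exact Mo.associator_naturality f g h

end Mix

/-!
Each snake composite of the transported pair is the image, under `F⊗` or `F⊕`, of the
corresponding snake composite in `X`: the coherence [LF.4] trades the distributor of `Y`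
for the image of the distributor of `X`, naturality pulls the images of `η` and `ε` inside
the functor, and [LF.1] together with the unit laws of `m⊤` and `n⊥` absorbs the unitors.
-/

namespace LDC

variable {C : Type u} [Category.{v} C] (X : LDC C) {A B : C}

def leftSnake (η : X.tu ⟶ X.op A B) (ε : X.ot B A ⟶ X.pu) : A ⟶ A :=
  (X.luT A).inv ≫ X.oth η (𝟙 A) ≫ X.distR A B A ≫ X.oph (𝟙 A) ε ≫ (X.ruP A).hom

def rightSnake (η : X.tu ⟶ X.op A B) (ε : X.ot B A ⟶ X.pu) : B ⟶ B :=
  (X.ruT B).inv ≫ X.oth (𝟙 B) η ≫ X.distL B A B ≫ X.oph ε (𝟙 B) ≫ (X.luP B).hom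

theorem isLinearDual_iff (η : X.tu ⟶ X.op A B) (ε : X.ot B A ⟶ X.pu) :
    IsLinearDual X A B η ε ↔ X.leftSnake η ε = 𝟙 A ∧ X.rightSnake η ε = 𝟙 B :=
  Iff.rfl

theorem oth_comp_id {A' A'' : C} (f : A ⟶ A') (g : A' ⟶ A'') :
    X.oth (f ≫ g) (𝟙 B) = X.oth f (𝟙 B) ≫ X.oth g (𝟙 B) := by
  rw [X.T.tensorHom_comp_tensorHom, Category.comp_id]

theorem oth_id_comp {B' B'' : C} (f : B ⟶ B') (g : B' ⟶ B'') :
    X.oth (𝟙 A) (f ≫ g) = X.oth (𝟙 A) f ≫ X.oth (𝟙 A) g := by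
  rw [X.T.tensorHom_comp_tensorHom, Category.comp_id]

theorem oph_comp_id {A' A'' : C} (f : A ⟶ A') (g : A' ⟶ A'') :
    X.oph (f ≫ g) (𝟙 B) = X.oph f (𝟙 B) ≫ X.oph g (𝟙 B) := by
  rw [X.P.tensorHom_comp_tensorHom, Category.comp_id]

theorem oph_id_comp {B' B'' : C} (f : B ⟶ B') (g : B' ⟶ B'') :
    X.oph (𝟙 A) (f ≫ g) = X.oph (𝟙 A) f ≫ X.oph (𝟙 A) g := by
  rw [X.P.tensorHom_comp_tensorHom, Category.comp_id]

end LDC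

namespace LinearFunctor

variable {C : Type u} [Category.{v} C] {D : Type u₂} [Category.{v₂} D]
  {X : LDC C} {Y : LDC D} (F : LinearFunctor X Y)

theorem mT_natural_left {A A' : C} (f : A ⟶ A') (B : C) :
    Y.oth (F.Ft.map f) (𝟙 (F.Ft.obj B)) ≫ F.mT A' B = F.mT A B ≫ F.Ft.map (X.oth f (𝟙 B)) := by
  simpa only [CategoryTheory.Functor.map_id] using F.laws.mT_natural f (𝟙 B)

theorem mT_natural_right (A : C) {B B' : C} (g : B ⟶ B') :
    Y.oth (𝟙 (F.Ft.obj A)) (F.Ft.map g) ≫ F.mT A B' = F.mT A B ≫ F.Ft.map (X.oth (𝟙 A) g) := by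
  simpa only [CategoryTheory.Functor.map_id] using F.laws.mT_natural (𝟙 A) g

theorem mU_mT (A : C) :
    Y.oth F.mU (𝟙 (F.Ft.obj A)) ≫ F.mT X.tu A
      = (Y.luT (F.Ft.obj A)).hom ≫ F.Ft.map (X.luT A).inv := by
  rw [← F.laws.mT_lu A]
  simp only [Category.assoc, ← Functor.map_comp, Iso.hom_inv_id, CategoryTheory.Functor.map_id,
    Category.comp_id]

theorem mT_mU (A : C) :
    Y.oth (𝟙 (F.Ft.obj A)) F.mU ≫ F.mT A X.tu
      = (Y.ruT (F.Ft.obj A)).hom ≫ F.Ft.map (X.ruT A).inv := by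
  rw [← F.laws.mT_ru A]
  simp only [Category.assoc, ← Functor.map_comp, Iso.hom_inv_id, CategoryTheory.Functor.map_id,
    Category.comp_id]

theorem nP_natural_left {A A' : C} (f : A ⟶ A') (B : C) :
    F.nP A B ≫ Y.oph (F.Fp.map f) (𝟙 (F.Fp.obj B)) = F.Fp.map (X.oph f (𝟙 B)) ≫ F.nP A' B := by
  simpa only [CategoryTheory.Functor.map_id] using (F.laws.nP_natural f (𝟙 B)).symm

theorem nP_natural_right (A : C) {B B' : C} (g : B ⟶ B') :
    F.nP A B ≫ Y.oph (𝟙 (F.Fp.obj A)) (F.Fp.map g) = F.Fp.map (X.oph (𝟙 A) g) ≫ F.nP A B' := by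
  simpa only [CategoryTheory.Functor.map_id] using (F.laws.nP_natural (𝟙 A) g).symm

theorem vtR_natural_left {A A' : C} (f : A ⟶ A') (B : C) :
    F.vtR A B ≫ Y.oph (F.Fp.map f) (𝟙 (F.Ft.obj B)) = F.Ft.map (X.oph f (𝟙 B)) ≫ F.vtR A' B := by
  simpa only [CategoryTheory.Functor.map_id] using (F.laws.vtR_natural f (𝟙 B)).symm

theorem vtL_natural_right (A : C) {B B' : C} (g : B ⟶ B') :
    F.vtL A B ≫ Y.oph (𝟙 (F.Ft.obj A)) (F.Fp.map g) = F.Ft.map (X.oph (𝟙 A) g) ≫ F.vtL A B' := by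
  simpa only [CategoryTheory.Functor.map_id] using (F.laws.vtL_natural (𝟙 A) g).symm

theorem vpR_natural_left {A A' : C} (f : A ⟶ A') (B : C) :
    Y.oth (F.Ft.map f) (𝟙 (F.Fp.obj B)) ≫ F.vpR A' B = F.vpR A B ≫ F.Fp.map (X.oth f (𝟙 B)) := by
  simpa only [CategoryTheory.Functor.map_id] using F.laws.vpR_natural f (𝟙 B)

theorem vpL_natural_right (A : C) {B B' : C} (g : B ⟶ B') :
    Y.oth (𝟙 (F.Fp.obj A)) (F.Ft.map g) ≫ F.vpL A B' = F.vpL A B ≫ F.Fp.map (X.oth (𝟙 A) g) := by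
  simpa only [CategoryTheory.Functor.map_id] using F.laws.vpL_natural (𝟙 A) g

variable {A B : C} (η : X.tu ⟶ X.op A B) (ε : X.ot B A ⟶ X.pu)

theorem leftSnake_vtL_eq_Ft_map :
    Y.leftSnake (F.mU ≫ F.Ft.map η ≫ F.vtL A B) (F.vpL B A ≫ F.Fp.map ε ≫ F.nU)
      = F.Ft.map (X.leftSnake η ε) := by
  simp only [LDC.leftSnake, Y.oth_comp_id, Y.oph_id_comp, Category.assoc]
  rw [reassoc_of% (F.laws.lf4b A B A), reassoc_of% (F.mT_natural_left η A),
    reassoc_of% (F.vtL_natural_right A ε), reassoc_of% (F.mU_mT A), Iso.inv_hom_id_assoc,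
    ← F.laws.lf1b A]
  simp only [Functor.map_comp]

theorem rightSnake_vtL_eq_Fp_map :
    Y.rightSnake (F.mU ≫ F.Ft.map η ≫ F.vtL A B) (F.vpL B A ≫ F.Fp.map ε ≫ F.nU)
      = F.Fp.map (X.rightSnake η ε) := by
  simp only [LDC.rightSnake, Y.oth_id_comp, Y.oph_comp_id, Category.assoc]
  rw [reassoc_of% (F.laws.lf4c B A B), reassoc_of% (F.vpL_natural_right B η),
    reassoc_of% (F.nP_natural_left ε B), reassoc_of% (F.laws.lf1d B), ← F.laws.nP_lu B]
  simp only [Functor.map_comp]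

theorem leftSnake_vtR_eq_Fp_map :
    Y.leftSnake (F.mU ≫ F.Ft.map η ≫ F.vtR A B) (F.vpR B A ≫ F.Fp.map ε ≫ F.nU)
      = F.Fp.map (X.leftSnake η ε) := by
  simp only [LDC.leftSnake, Y.oth_comp_id, Y.oph_id_comp, Category.assoc]
  rw [reassoc_of% (F.laws.lf4d A B A), reassoc_of% (F.vpR_natural_left η A),
    reassoc_of% (F.nP_natural_right A ε), reassoc_of% (F.laws.lf1c A), ← F.laws.nP_ru A]
  simp only [Functor.map_comp]

theorem rightSnake_vtR_eq_Ft_map :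
    Y.rightSnake (F.mU ≫ F.Ft.map η ≫ F.vtR A B) (F.vpR B A ≫ F.Fp.map ε ≫ F.nU)
      = F.Ft.map (X.rightSnake η ε) := by
  simp only [LDC.rightSnake, Y.oth_id_comp, Y.oph_comp_id, Category.assoc]
  rw [reassoc_of% (F.laws.lf4a B A B), reassoc_of% (F.mT_natural_right B η),
    reassoc_of% (F.vtR_natural_left ε B), reassoc_of% (F.mT_mU B), Iso.inv_hom_id_assoc,
    ← F.laws.lf1a B]
  simp only [Functor.map_comp]

end LinearFunctor

theorem linear_functor_preserves_linear_duals
    {C : Type u} [Category.{v} C] {D : Type u₂} [Category.{v₂} D]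
    {X : LDC C} {Y : LDC D} (F : LinearFunctor X Y)
    {A B : C} (η : X.tu ⟶ X.op A B) (ε : X.ot B A ⟶ X.pu)
    (h : IsLinearDual X A B η ε) :
    IsLinearDual Y (F.Ft.obj A) (F.Fp.obj B)
      (F.mU ≫ F.Ft.map η ≫ F.vtL A B)
      (F.vpL B A ≫ F.Fp.map ε ≫ F.nU) ∧
    IsLinearDual Y (F.Fp.obj A) (F.Ft.obj B)
      (F.mU ≫ F.Ft.map η ≫ F.vtR A B)
      (F.vpR B A ≫ F.Fp.map ε ≫ F.nU) := by
  obtain ⟨hleft, hright⟩ := (X.isLinearDual_iff η ε).mp h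
  simp only [LDC.isLinearDual_iff, F.leftSnake_vtL_eq_Ft_map, F.rightSnake_vtL_eq_Fp_map,
    F.leftSnake_vtR_eq_Fp_map, F.rightSnake_vtR_eq_Ft_map, hleft, hright,
    CategoryTheory.Functor.map_id, and_self]
end

section
/- For LDCs X and Y the following are equivalent: (a) F : X → Y is a Frobenius linear functor; (b) F is a single functor equipped with a lax ⊗-monoidal structure (m⊗, m⊤) and a ⊕-comonoidal structure (n⊕, n⊥) satisfying the two Frobenius interchange laws [F.1]: (1 ⊗ n⊕) ; ∂L ; (m⊗ ⊕ 1) = m⊗ ; F(∂L) ; n⊕ as maps F(A) ⊗ F(B ⊕ C) → F(A ⊗ B) ⊕ F(C), and [F.2]: (n⊕ ⊗ 1) ; ∂R ; (1 ⊕ m⊗) = m⊗ ; F(∂R) ; n⊕ as maps F(A ⊕ B) ⊗ F(C) → F(A) ⊕ F(B ⊗ C). -/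
open CategoryTheory

universe v u v₂ u₂ v₃ u₃

section Stmt3

variable {C : Type u} [Category.{v} C] {D : Type u₂} [Category.{v₂} D]

/-- Condition (b) of STATEMENT 3: a single functor `F` which is lax `⊗`-monoidal via
`(mT, mU)` and `⊕`-comonoidal via `(nP, nU)` (with the usual naturality,
associativity and unit laws), satisfying the two Frobenius interchange laws
[F.1] and [F.2]. -/
structure FrobeniusShape (X : LDC C) (Y : LDC D) (F : C ⥤ D)
    (mT : ∀ A B : C, Y.ot (F.obj A) (F.obj B) ⟶ F.obj (X.ot A B))
    (mU : Y.tu ⟶ F.obj X.tu)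
    (nP : ∀ A B : C, F.obj (X.op A B) ⟶ Y.op (F.obj A) (F.obj B))
    (nU : F.obj X.pu ⟶ Y.pu) : Prop where
  mT_natural : ∀ {A A' B B' : C} (f : A ⟶ A') (g : B ⟶ B'),
    Y.oth (F.map f) (F.map g) ≫ mT A' B' = mT A B ≫ F.map (X.oth f g)
  mT_assoc : ∀ A B Cc : C,
    Y.oth (mT A B) (𝟙 (F.obj Cc)) ≫ mT (X.ot A B) Cc ≫ F.map (X.aT A B Cc).hom
      = (Y.aT (F.obj A) (F.obj B) (F.obj Cc)).hom
          ≫ Y.oth (𝟙 (F.obj A)) (mT B Cc) ≫ mT A (X.ot B Cc)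
  mT_lu : ∀ A : C,
    Y.oth mU (𝟙 (F.obj A)) ≫ mT X.tu A ≫ F.map (X.luT A).hom = (Y.luT (F.obj A)).hom
  mT_ru : ∀ A : C,
    Y.oth (𝟙 (F.obj A)) mU ≫ mT A X.tu ≫ F.map (X.ruT A).hom = (Y.ruT (F.obj A)).hom
  nP_natural : ∀ {A A' B B' : C} (f : A ⟶ A') (g : B ⟶ B'),
    F.map (X.oph f g) ≫ nP A' B' = nP A B ≫ Y.oph (F.map f) (F.map g)
  nP_assoc : ∀ A B Cc : C,
    nP (X.op A B) Cc ≫ Y.oph (nP A B) (𝟙 (F.obj Cc))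
        ≫ (Y.aP (F.obj A) (F.obj B) (F.obj Cc)).hom
      = F.map (X.aP A B Cc).hom ≫ nP A (X.op B Cc) ≫ Y.oph (𝟙 (F.obj A)) (nP B Cc)
  nP_lu : ∀ A : C,
    F.map (X.luP A).hom = nP X.pu A ≫ Y.oph nU (𝟙 (F.obj A)) ≫ (Y.luP (F.obj A)).hom
  nP_ru : ∀ A : C,
    F.map (X.ruP A).hom = nP A X.pu ≫ Y.oph (𝟙 (F.obj A)) nU ≫ (Y.ruP (F.obj A)).hom
  /-- [F.1]: `(1 ⊗ n⊕) ; ∂L ; (m⊗ ⊕ 1) = m⊗ ; F(∂L) ; n⊕ :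
  F(A) ⊗ F(B ⊕ C) ⟶ F(A ⊗ B) ⊕ F(C)` -/
  f1 : ∀ A B Cc : C,
    Y.oth (𝟙 (F.obj A)) (nP B Cc) ≫ Y.distL (F.obj A) (F.obj B) (F.obj Cc)
        ≫ Y.oph (mT A B) (𝟙 (F.obj Cc))
      = mT A (X.op B Cc) ≫ F.map (X.distL A B Cc) ≫ nP (X.ot A B) Cc
  /-- [F.2]: `(n⊕ ⊗ 1) ; ∂R ; (1 ⊕ m⊗) = m⊗ ; F(∂R) ; n⊕ :
  F(A ⊕ B) ⊗ F(C) ⟶ F(A) ⊕ F(B ⊗ C)` -/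
  f2 : ∀ A B Cc : C,
    Y.oth (nP A B) (𝟙 (F.obj Cc)) ≫ Y.distR (F.obj A) (F.obj B) (F.obj Cc)
        ≫ Y.oph (𝟙 (F.obj A)) (mT B Cc)
      = mT (X.op A B) Cc ≫ F.map (X.distR A B Cc) ≫ nP A (X.ot B Cc)

/-!
STATEMENT 3: For LDCs `X`, `Y` and data `(F, m⊗, m⊤, n⊕, n⊥)`, the following are
equivalent: (a) the data, with `F⊗ = F⊕ = F`, `ν⊕ᴸ = ν⊕ᴿ = m⊗` and `ν⊗ᴸ = ν⊗ᴿ = n⊕`,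
is a Frobenius linear functor (i.e. satisfies all the linear functor laws);
(b) `F` is `⊗`-monoidal and `⊕`-comonoidal and satisfies [F.1] and [F.2].
-/
theorem frobenius_iff_monoidal_comonoidal_F1_F2
    (X : LDC C) (Y : LDC D) (F : C ⥤ D)
    (mT : ∀ A B : C, Y.ot (F.obj A) (F.obj B) ⟶ F.obj (X.ot A B))
    (mU : Y.tu ⟶ F.obj X.tu)
    (nP : ∀ A B : C, F.obj (X.op A B) ⟶ Y.op (F.obj A) (F.obj B))
    (nU : F.obj X.pu ⟶ Y.pu) :
    LinearFunctorLaws (X := X) (Y := Y) ⟨F, F, mT, mU, nP, nU, nP, nP, mT, mT⟩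
      ↔ FrobeniusShape X Y F mT mU nP nU := by
  constructor
  · intro h
    exact ⟨h.mT_natural, h.mT_assoc, h.mT_lu, h.mT_ru, h.nP_natural, h.nP_assoc,
      h.nP_lu, h.nP_ru, h.lf5a, h.lf5b⟩
  · intro h
    refine ⟨h.mT_natural, h.mT_assoc, h.mT_lu, h.mT_ru, h.nP_natural, h.nP_assoc,
      h.nP_lu, h.nP_ru, h.nP_natural, h.nP_natural, h.mT_natural, h.mT_natural,
      h.nP_lu, h.nP_ru, ?_, ?_,
      fun A B Cc => (h.nP_assoc A B Cc).symm, fun A B Cc => (h.nP_assoc A B Cc).symm,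
      h.mT_assoc, h.mT_assoc,
      fun A B Cc => (h.nP_assoc A B Cc).symm, h.mT_assoc,
      h.f1, h.f2, h.f1, h.f2, h.f1, h.f2, h.f1, h.f2⟩
    · intro A
      rw [← cancel_mono (F.map (X.luT A).hom)]
      simp only [Category.assoc, h.mT_lu A, ← Functor.map_comp, Iso.inv_hom_id,
        Functor.map_id, CategoryTheory.Functor.map_id]
    · intro A
      rw [← cancel_mono (F.map (X.ruT A).hom)]
      simp only [Category.assoc, h.mT_ru A, ← Functor.map_comp, Iso.inv_hom_id,
        Functor.map_id, CategoryTheory.Functor.map_id]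

end Stmt3
end

section
/- For a mix Frobenius functor F : X → Y between isomix categories, the following are equivalent: (i) n⊥ : F(⊥) → ⊥ is an isomorphism, or m⊤ : ⊤ → F(⊤) is an isomorphism; (ii) F is normal, i.e., both n⊥ and m⊤ are isomorphisms; (iii) F is an isomix functor, i.e., m⊤ ; F(m⁻¹) ; n⊥ = m⁻¹ : ⊤ → ⊥. -/
open CategoryTheory

universe v u v₂ u₂ v₃ u₃

/-!
STATEMENT 6: For a mix Frobenius functor `F : X → Y` between isomix categories, TFAE:
(i)   `n⊥ : F(⊥) ⟶ ⊥` is an isomorphism, or `m⊤ : ⊤ ⟶ F(⊤)` is an isomorphism;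
(ii)  `F` is normal, i.e. both `n⊥` and `m⊤` are isomorphisms;
(iii) `F` is an isomix functor, i.e. `m⊤ ; F(m⁻¹) ; n⊥ = m⁻¹`.
-/
theorem mix_frobenius_normal_iff_isomix
    {C : Type u} [Category.{v} C] {D : Type u₂} [Category.{v₂} D]
    {M : IsomixCat C} {N : IsomixCat D}
    (G : FrobFunctor M.X N.X) (hmix : IsMixFunctor (M := M.toMixCat) (N := N.toMixCat) G) :
    [(IsIso G.nU ∨ IsIso G.mU),
     (IsIso G.nU ∧ IsIso G.mU),
     (G.mU ≫ G.F.map M.mixInv ≫ G.nU = N.mixInv)].TFAE := by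
  have hmix' : G.nU ≫ N.mix ≫ G.mU = G.F.map M.mix := hmix
  have hFm : G.F.map M.mix ≫ G.F.map M.mixInv = 𝟙 _ := by
    rw [← G.F.map_comp, M.mix_mixInv, G.F.map_id]
  have hFm' : G.F.map M.mixInv ≫ G.F.map M.mix = 𝟙 _ := by
    rw [← G.F.map_comp, M.mixInv_mix, G.F.map_id]
  tfae_have 3 → 2 := by
    intro h3
    constructor
    · refine ⟨N.mix ≫ G.mU ≫ G.F.map M.mixInv, ?_, ?_⟩
      · calc G.nU ≫ N.mix ≫ G.mU ≫ G.F.map M.mixInv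
            = (G.nU ≫ N.mix ≫ G.mU) ≫ G.F.map M.mixInv := by simp
          _ = 𝟙 _ := by rw [hmix', hFm]
      · calc (N.mix ≫ G.mU ≫ G.F.map M.mixInv) ≫ G.nU
            = N.mix ≫ (G.mU ≫ G.F.map M.mixInv ≫ G.nU) := by simp
          _ = 𝟙 _ := by rw [h3, N.mix_mixInv]
    · refine ⟨G.F.map M.mixInv ≫ G.nU ≫ N.mix, ?_, ?_⟩
      · calc G.mU ≫ G.F.map M.mixInv ≫ G.nU ≫ N.mix
            = (G.mU ≫ G.F.map M.mixInv ≫ G.nU) ≫ N.mix := by simp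
          _ = 𝟙 _ := by rw [h3, N.mixInv_mix]
      · calc (G.F.map M.mixInv ≫ G.nU ≫ N.mix) ≫ G.mU
            = G.F.map M.mixInv ≫ (G.nU ≫ N.mix ≫ G.mU) := by simp
          _ = 𝟙 _ := by rw [hmix', hFm']
  tfae_have 2 → 1 := fun h => Or.inl h.1
  tfae_have 1 → 3 := by
    haveI hNm : IsIso N.mix := ⟨N.mixInv, N.mix_mixInv, N.mixInv_mix⟩
    rintro (h | h)
    · rw [← cancel_epi N.mix, ← cancel_epi G.nU]
      calc G.nU ≫ N.mix ≫ G.mU ≫ G.F.map M.mixInv ≫ G.nU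
          = (G.nU ≫ N.mix ≫ G.mU) ≫ G.F.map M.mixInv ≫ G.nU := by simp
        _ = (G.F.map M.mix ≫ G.F.map M.mixInv) ≫ G.nU := by rw [hmix']; simp
        _ = G.nU := by rw [hFm]; simp
        _ = G.nU ≫ N.mix ≫ N.mixInv := by rw [N.mix_mixInv]; simp
    · rw [← cancel_mono N.mix, ← cancel_mono G.mU]
      calc ((G.mU ≫ G.F.map M.mixInv ≫ G.nU) ≫ N.mix) ≫ G.mU
          = G.mU ≫ G.F.map M.mixInv ≫ (G.nU ≫ N.mix ≫ G.mU) := by simp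
        _ = G.mU ≫ G.F.map M.mixInv ≫ G.F.map M.mix := by rw [hmix']
        _ = G.mU := by rw [hFm']; simp
        _ = (N.mixInv ≫ N.mix) ≫ G.mU := by rw [N.mixInv_mix]; simp
  tfae_finish
end

section
/- Let F, G : X → Y be isomix Frobenius functors between isomix categories. A linear transformation α = (α⊗, α⊕) : F ⇒ G is a linear natural isomorphism (i.e., α⊗ is an isomorphism) if and only if α⊗ = α⊕⁻¹. -/
open CategoryTheory

universe v u v₂ u₂ v₃ u₃

/-!
Because `m : ⊥ ⟶ ⊤` is invertible, `ρ⁻¹ ; (1 ⊗ m⁻¹) : A ⟶ A ⊗ ⊥` is an isomorphism, and a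
Frobenius functor `H` sends it to `ρ⁻¹ ; (1 ⊗ u_H) ; m⊗` with `u_H := m⊤ ; H(m⁻¹) : ⊤ ⟶ H ⊥`.
The mix condition on `F` makes `n⊥ ; m` a left inverse of `u_F`, which pins down
`α⊕_⊥ = n⊥ ; m ; u_F`; the isomix condition on `G` makes it a right inverse of `u_G`, so that
`u_G ; α⊕_⊥ = u_F`. Feeding this into [LT.4] at `(A, ⊥)` gives
`α⊗_A ; α⊕_A ; F(ρ⁻¹ ; (1 ⊗ m⁻¹)) = F(ρ⁻¹ ; (1 ⊗ m⁻¹))`, hence `α⊗ ; α⊕ = 1` for every linear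
transformation. So `α⊗` is invertible exactly when `α⊕` is its inverse.
-/

-- So that the components of `α : LinearTransf F.data G.data` compose as maps of `F.F`, `G.F`.
attribute [reducible] FrobFunctor.data

section Monoidal

open MonoidalCategory

variable {D : Type u₂} [Category.{v₂} D] [MonoidalCategory D]

theorem rightUnitor_inv_id_tensorHom_naturality {A B P : D} (f : A ⟶ B) (u : 𝟙_ D ⟶ P) :
    f ≫ (ρ_ B).inv ≫ (𝟙 B ⊗ₘ u) = (ρ_ A).inv ≫ (𝟙 A ⊗ₘ u) ≫ (f ⊗ₘ 𝟙 P) := by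
  rw [id_tensorHom, id_tensorHom, tensorHom_id, whisker_exchange,
    rightUnitor_inv_naturality_assoc]

end Monoidal

namespace IsomixCat

variable {C : Type u} [Category.{v} C] (M : IsomixCat C)

instance isIso_mixInv : IsIso M.mixInv := ⟨M.mix, M.mixInv_mix, M.mix_mixInv⟩

def rightUnitorBot (A : C) : A ⟶ M.X.ot A M.X.pu :=
  (M.X.ruT A).inv ≫ M.X.oth (𝟙 A) M.mixInv

instance isIso_rightUnitorBot (A : C) : IsIso (M.rightUnitorBot A) := by
  let _ : MonoidalCategory C := M.X.T
  unfold rightUnitorBot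
  infer_instance

end IsomixCat

namespace LinearFunctorLaws

variable {C : Type u} [Category.{v} C] {D : Type u₂} [Category.{v₂} D]
  {X : LDC C} {Y : LDC D} {F : LinearFunctorData X Y}

theorem map_rightUnitor_inv_comp_id_tensorHom (hF : LinearFunctorLaws F) (A : C) {P : C}
    (g : X.tu ⟶ P) :
    F.Fp.map ((X.ruT A).inv ≫ X.oth (𝟙 A) g)
      = (Y.ruT (F.Fp.obj A)).inv ≫ Y.oth (𝟙 (F.Fp.obj A)) (F.mU ≫ F.Ft.map g) ≫ F.vpL A P := by
  have hg := hF.vpL_natural (𝟙 A) g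
  rw [F.Fp.map_id] at hg
  rw [F.Fp.map_comp, ← hF.lf1d, Category.assoc, Category.assoc, ← hg,
    Y.T.tensorHom_comp_tensorHom_assoc, Category.id_comp]

end LinearFunctorLaws

namespace FrobFunctor

variable {C : Type u} [Category.{v} C] {D : Type u₂} [Category.{v₂} D]
  {M : IsomixCat C} {N : IsomixCat D} (H : FrobFunctor M.X N.X)

def mixInvUnit : N.X.tu ⟶ H.F.obj M.X.pu := H.mU ≫ H.F.map M.mixInv

theorem map_rightUnitorBot (A : C) :
    H.F.map (M.rightUnitorBot A)
      = (N.X.ruT (H.F.obj A)).inv ≫ N.X.oth (𝟙 (H.F.obj A)) H.mixInvUnit ≫ H.mT A M.X.pu :=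
  H.laws.map_rightUnitor_inv_comp_id_tensorHom A M.mixInv

theorem mixInvUnit_nU_mix (hH : IsIsomixFunctor H) :
    H.mixInvUnit ≫ H.nU ≫ N.mix = 𝟙 N.X.tu := by
  rw [mixInvUnit, Category.assoc, reassoc_of% hH, N.mixInv_mix]

theorem nU_mix_mixInvUnit (hH : IsMixFunctor (M := M.toMixCat) (N := N.toMixCat) H) :
    H.nU ≫ N.mix ≫ H.mixInvUnit = 𝟙 (H.F.obj M.X.pu) := by
  rw [mixInvUnit, reassoc_of% hH, ← H.F.map_comp, M.mix_mixInv, H.F.map_id]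

end FrobFunctor

namespace LinearTransf

variable {C : Type u} [Category.{v} C] {D : Type u₂} [Category.{v₂} D]
  {M : IsomixCat C} {N : IsomixCat D} {F G : FrobFunctor M.X N.X}
  (α : LinearTransf F.data G.data)

theorem aP_bot_eq (hF : IsMixFunctor (M := M.toMixCat) (N := N.toMixCat) F) :
    α.aP M.X.pu = G.nU ≫ N.mix ≫ F.mixInvUnit :=
  calc α.aP M.X.pu = α.aP M.X.pu ≫ F.nU ≫ N.mix ≫ F.mixInvUnit := by
        rw [F.nU_mix_mixInvUnit hF, Category.comp_id]
    _ = G.nU ≫ N.mix ≫ F.mixInvUnit := by rw [reassoc_of% α.aP_counit]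

theorem mixInvUnit_comp_aP (hF : IsMixFunctor (M := M.toMixCat) (N := N.toMixCat) F)
    (hG : IsIsomixFunctor G) : G.mixInvUnit ≫ α.aP M.X.pu = F.mixInvUnit := by
  rw [α.aP_bot_eq hF, reassoc_of% (G.mixInvUnit_nU_mix hG)]

theorem aT_comp_aP (hF : IsMixFunctor (M := M.toMixCat) (N := N.toMixCat) F)
    (hG : IsIsomixFunctor G) (A : C) : α.aT A ≫ α.aP A = 𝟙 (F.F.obj A) := by
  let _ : MonoidalCategory D := N.X.T
  rw [← cancel_mono (F.F.map (M.rightUnitorBot A))]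
  calc (α.aT A ≫ α.aP A) ≫ F.F.map (M.rightUnitorBot A)
      = α.aT A ≫ G.F.map (M.rightUnitorBot A) ≫ α.aP (M.X.ot A M.X.pu) := by
        rw [Category.assoc, ← α.aP_natural]
    _ = (N.X.ruT (F.F.obj A)).inv ≫ N.X.oth (𝟙 (F.F.obj A)) G.mixInvUnit
          ≫ N.X.oth (α.aT A) (𝟙 (G.F.obj M.X.pu)) ≫ G.mT A M.X.pu ≫ α.aP (M.X.ot A M.X.pu) := by
        rw [G.map_rightUnitorBot, Category.assoc, Category.assoc,
          reassoc_of% rightUnitor_inv_id_tensorHom_naturality]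
    _ = (N.X.ruT (F.F.obj A)).inv ≫ N.X.oth (𝟙 (F.F.obj A)) G.mixInvUnit
          ≫ N.X.oth (𝟙 (F.F.obj A)) (α.aP M.X.pu) ≫ F.mT A M.X.pu := by
        rw [α.lt4]
    _ = F.F.map (M.rightUnitorBot A) := by
        rw [N.X.T.tensorHom_comp_tensorHom_assoc, Category.id_comp, α.mixInvUnit_comp_aP hF hG,
          F.map_rightUnitorBot]
    _ = 𝟙 (F.F.obj A) ≫ F.F.map (M.rightUnitorBot A) := (Category.id_comp _).symm

end LinearTransf

theorem isomix_frobenius_linear_iso_iff_general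
    {C : Type u} [Category.{v} C] {D : Type u₂} [Category.{v₂} D]
    {M : IsomixCat C} {N : IsomixCat D}
    (F G : FrobFunctor M.X N.X)
    (hF : IsMixFunctor (M := M.toMixCat) (N := N.toMixCat) F)
    (hG' : IsIsomixFunctor (M := M) (N := N) G)
    (α : LinearTransf F.data G.data) :
    (∀ A : C, IsIso (α.aT A)) ↔
      (∀ A : C, α.aT A ≫ α.aP A = 𝟙 (F.F.obj A) ∧ α.aP A ≫ α.aT A = 𝟙 (G.F.obj A)) := by
  refine ⟨fun _ A => ?_, fun hinv A => ⟨α.aP A, hinv A⟩⟩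
  have hcomp := α.aT_comp_aP hF hG' A
  refine ⟨hcomp, ?_⟩
  rw [← IsIso.inv_eq_of_hom_inv_id hcomp, IsIso.inv_hom_id]

theorem isomix_frobenius_linear_iso_iff
    {C : Type u} [Category.{v} C] {D : Type u₂} [Category.{v₂} D]
    {M : IsomixCat C} {N : IsomixCat D}
    (F G : FrobFunctor M.X N.X)
    (hF : IsMixFunctor (M := M.toMixCat) (N := N.toMixCat) F)
    (hF' : IsIsomixFunctor (M := M) (N := N) F)
    (hG : IsMixFunctor (M := M.toMixCat) (N := N.toMixCat) G)
    (hG' : IsIsomixFunctor (M := M) (N := N) G)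
    (α : LinearTransf F.data G.data) :
    (∀ A : C, IsIso (α.aT A)) ↔
      (∀ A : C, α.aT A ≫ α.aP A = 𝟙 (F.F.obj A) ∧ α.aP A ≫ α.aT A = 𝟙 (G.F.obj A)) :=
  isomix_frobenius_linear_iso_iff_general F G hF hG' α
end

section
/- A †-linearly distributive category (an LDC X with a contravariant Frobenius linear functor (−)† : Xᵒᵖ → X that is a linear involutive equivalence (−)† ⊣⊣ ((−)†)ᵒᵖ) is exactly the same data as an LDC X with a functor (−)† : Xᵒᵖ → X, natural isomorphisms (laxors) λ⊗ : A† ⊗ B† → (A ⊕ B)†, λ⊕ : A† ⊕ B† → (A ⊗ B)†, λ⊤ : ⊤ → ⊥†, λ⊥ : ⊥ → ⊤†, and a natural isomorphism (involutor) ι : A → (A†)† satisfying: [†-ldc.1] compatibility of λ⊗ and λ⊕ with the associators of ⊗ and ⊕; [†-ldc.2] compatibility of λ⊤ and λ⊥ with the (left and right) unitors; [†-ldc.3] compatibility of λ⊗ and λ⊕ with the linear distributors ∂L and ∂R; [†-ldc.4] ι_{A⊕B} ; λ⊗† = (ι ⊕ ι) ; λ⊕ and ι_{A⊗B} ; λ⊕†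 = (ι ⊗ ι) ; λ⊗; [†-ldc.5] ι_⊥ ; λ⊤† = λ⊥ and ι_⊤ ; λ⊥† = λ⊤; [†-ldc.6] ι_{A†} = (ι_A⁻¹)†. -/
open CategoryTheory

universe v u v₂ u₂ v₃ u₃

section Dagger

open Opposite

variable {C : Type u} [Category.{v} C]

/-- The data of a dagger on an LDC: a contravariant functor `(−)† : Cᵒᵖ ⥤ C` together
with natural isomorphisms (laxors) `λ⊗ : A† ⊗ B† ≅ (A ⊕ B)†`, `λ⊕ : A† ⊕ B† ≅ (A ⊗ B)†`,
`λ⊤ : ⊤ ≅ ⊥†`, `λ⊥ : ⊥ ≅ ⊤†` and the involutor `ι : A ≅ A††`. -/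
structure DagData (X : LDC C) where
  dag : Cᵒᵖ ⥤ C
  lamTens : ∀ A B : C, X.ot (dag.obj (op A)) (dag.obj (op B)) ≅ dag.obj (op (X.op A B))
  lamPar : ∀ A B : C, X.op (dag.obj (op A)) (dag.obj (op B)) ≅ dag.obj (op (X.ot A B))
  lamTop : X.tu ≅ dag.obj (op X.pu)
  lamBot : X.pu ≅ dag.obj (op X.tu)
  invol : ∀ A : C, A ≅ dag.obj (op (dag.obj (op A)))

namespace DagData

variable {X : LDC C}

/-- `A†` -/
abbrev dg (D : DagData X) (A : C) : C := D.dag.obj (op A)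

/-- `f† : B† ⟶ A†` for `f : A ⟶ B` -/
abbrev dgm (D : DagData X) {A B : C} (f : A ⟶ B) : D.dg B ⟶ D.dg A := D.dag.map f.op

end DagData

/-- The coherence laws [†-ldc.1]–[†-ldc.6] making `(X, dag, λ⊗, λ⊕, λ⊤, λ⊥, ι)` into a
†-LDC (as spelled out in the unfolded definition of a †-linearly distributive category),
together with naturality of the laxors and of the involutor. -/
structure DagLaws {X : LDC C} (D : DagData X) : Prop where
  lamTens_natural : ∀ {A A' B B' : C} (f : A ⟶ A') (g : B ⟶ B'),
    X.oth (D.dgm f) (D.dgm g) ≫ (D.lamTens A B).hom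
      = (D.lamTens A' B').hom ≫ D.dgm (X.oph f g)
  lamPar_natural : ∀ {A A' B B' : C} (f : A ⟶ A') (g : B ⟶ B'),
    X.oph (D.dgm f) (D.dgm g) ≫ (D.lamPar A B).hom
      = (D.lamPar A' B').hom ≫ D.dgm (X.oth f g)
  invol_natural : ∀ {A B : C} (f : A ⟶ B),
    f ≫ (D.invol B).hom = (D.invol A).hom ≫ D.dgm (D.dgm f)
  /-- [†-ldc.1] for `λ⊗` and the associators -/
  ldc1a : ∀ A B Cc : C,
    (X.aT (D.dg A) (D.dg B) (D.dg Cc)).inv ≫ X.oth (D.lamTens A B).hom (𝟙 (D.dg Cc))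
        ≫ (D.lamTens (X.op A B) Cc).hom
      = X.oth (𝟙 (D.dg A)) (D.lamTens B Cc).hom ≫ (D.lamTens A (X.op B Cc)).hom
          ≫ D.dgm (X.aP A B Cc).hom
  /-- [†-ldc.1] for `λ⊕` and the associators -/
  ldc1b : ∀ A B Cc : C,
    (X.aP (D.dg A) (D.dg B) (D.dg Cc)).inv ≫ X.oph (D.lamPar A B).hom (𝟙 (D.dg Cc))
        ≫ (D.lamPar (X.ot A B) Cc).hom
      = X.oph (𝟙 (D.dg A)) (D.lamPar B Cc).hom ≫ (D.lamPar A (X.ot B Cc)).hom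
          ≫ D.dgm (X.aT A B Cc).hom
  /-- [†-ldc.2] for `λ⊤` (left) -/
  ldc2a : ∀ A : C,
    X.oth D.lamTop.hom (𝟙 (D.dg A)) ≫ (D.lamTens X.pu A).hom
      = (X.luT (D.dg A)).hom ≫ D.dgm (X.luP A).hom
  /-- [†-ldc.2] for `λ⊤` (right) -/
  ldc2b : ∀ A : C,
    X.oth (𝟙 (D.dg A)) D.lamTop.hom ≫ (D.lamTens A X.pu).hom
      = (X.ruT (D.dg A)).hom ≫ D.dgm (X.ruP A).hom
  /-- [†-ldc.2] for `λ⊥` (left) -/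
  ldc2c : ∀ A : C,
    X.oph D.lamBot.hom (𝟙 (D.dg A)) ≫ (D.lamPar X.tu A).hom
      = (X.luP (D.dg A)).hom ≫ D.dgm (X.luT A).hom
  /-- [†-ldc.2] for `λ⊥` (right) -/
  ldc2d : ∀ A : C,
    X.oph (𝟙 (D.dg A)) D.lamBot.hom ≫ (D.lamPar A X.tu).hom
      = (X.ruP (D.dg A)).hom ≫ D.dgm (X.ruT A).hom
  /-- [†-ldc.3] (first distributor square) -/
  ldc3a : ∀ A B Cc : C,
    X.distL (D.dg A) (D.dg B) (D.dg Cc) ≫ X.oph (D.lamTens A B).hom (𝟙 (D.dg Cc))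
        ≫ (D.lamPar (X.op A B) Cc).hom
      = X.oth (𝟙 (D.dg A)) (D.lamPar B Cc).hom ≫ (D.lamTens A (X.ot B Cc)).hom
          ≫ D.dgm (X.distR A B Cc)
  /-- [†-ldc.3] (second distributor square) -/
  ldc3b : ∀ A B Cc : C,
    X.distR (D.dg A) (D.dg B) (D.dg Cc) ≫ X.oph (𝟙 (D.dg A)) (D.lamTens B Cc).hom
        ≫ (D.lamPar A (X.op B Cc)).hom
      = X.oth (D.lamPar A B).hom (𝟙 (D.dg Cc)) ≫ (D.lamTens (X.ot A B) Cc).hom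
          ≫ D.dgm (X.distL A B Cc)
  /-- [†-ldc.4] : `ι_{A⊕B} ; λ⊗† = (ι ⊕ ι) ; λ⊕` -/
  ldc4a : ∀ A B : C,
    (D.invol (X.op A B)).hom ≫ D.dgm (D.lamTens A B).hom
      = X.oph (D.invol A).hom (D.invol B).hom ≫ (D.lamPar (D.dg A) (D.dg B)).hom
  /-- [†-ldc.4] : `ι_{A⊗B} ; λ⊕† = (ι ⊗ ι) ; λ⊗` -/
  ldc4b : ∀ A B : C,
    (D.invol (X.ot A B)).hom ≫ D.dgm (D.lamPar A B).hom
      = X.oth (D.invol A).hom (D.invol B).hom ≫ (D.lamTens (D.dg A) (D.dg B)).hom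
  /-- [†-ldc.5] : `ι_⊥ ; λ⊤† = λ⊥` -/
  ldc5a : (D.invol X.pu).hom ≫ D.dgm D.lamTop.hom = D.lamBot.hom
  /-- [†-ldc.5] : `ι_⊤ ; λ⊥† = λ⊤` -/
  ldc5b : (D.invol X.tu).hom ≫ D.dgm D.lamBot.hom = D.lamTop.hom
  /-- [†-ldc.6] : `ι_{A†} = (ι_A⁻¹)†` -/
  ldc6 : ∀ A : C, (D.invol (D.dg A)).hom = D.dgm ((D.invol A).inv)

/-- The [†-mix] condition for a †-LDC with a mix map: `λ⊥ ; m† = m ; λ⊤`. -/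
def DagMixLaw (M : MixCat C) (D : DagData M.X) : Prop :=
  D.lamBot.hom ≫ D.dgm M.mix = M.mix ≫ D.lamTop.hom

end Dagger
section Stmt8

open Opposite

variable {C : Type u} [Category.{v} C]

/-- A bundled monoidal structure induces one on the opposite category. -/
def MonoidalCategory.opMon (M : MonoidalCategory C) : MonoidalCategory Cᵒᵖ :=
  letI := M
  CategoryTheory.monoidalCategoryOp

/-- The opposite LDC `Xᵒᵖ`: tensor and par are interchanged
(`⊗ᵒᵖ := ⊕`, `⊤ᵒᵖ := ⊥`, `⊕ᵒᵖ := ⊗`, `⊥ᵒᵖ := ⊤`). -/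
def LDC.opp (X : LDC C) : LDC Cᵒᵖ where
  T := MonoidalCategory.opMon X.P
  P := MonoidalCategory.opMon X.T
  distL A B Z := (X.distR A.unop B.unop Z.unop).op
  distR A B Z := (X.distL A.unop B.unop Z.unop).op
  distL_natural f g h := Quiver.Hom.unop_inj (X.distR_natural f.unop g.unop h.unop).symm
  distR_natural f g h := Quiver.Hom.unop_inj (X.distL_natural f.unop g.unop h.unop).symm

/-- The data of a dagger, packaged as the data of a contravariant Frobenius linear
functor `(−)† : Xᵒᵖ → X` (tensor and par part both `dag`, monoidal laxors `λ⊗, λ⊤`,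
comonoidal colaxors `λ⊕⁻¹, λ⊥⁻¹`, and the linear strengths given by these as well). -/
def DagData.frobData {X : LDC C} (D : DagData X) : LinearFunctorData X.opp X where
  Ft := D.dag
  Fp := D.dag
  mT A B := (D.lamTens A.unop B.unop).hom
  mU := D.lamTop.hom
  nP A B := (D.lamPar A.unop B.unop).inv
  nU := D.lamBot.inv
  vtR A B := (D.lamPar A.unop B.unop).inv
  vtL A B := (D.lamPar A.unop B.unop).inv
  vpR A B := (D.lamTens A.unop B.unop).hom
  vpL A B := (D.lamTens A.unop B.unop).hom


/-
Because the dagger is Frobenius, its tensor and par parts coincide and every linear strength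
is one of the laxors `λ⊗`, `λ⊕⁻¹`. Each of the Cockett–Seely axioms [LF.1]–[LF.5] for the
dagger is therefore, after moving isomorphisms across the equation, one of [†-ldc.1]–[†-ldc.3].
On the other side, `ι⁻¹` is the unit and counit of an adjunction `(−)† ⊣ ((−)†)ᵒᵖ` exactly when
`ι` is natural and the triangle identity holds, and the triangle identity is [†-ldc.6]; the
linearity of `ι` is [†-ldc.4] and [†-ldc.5].
-/

theorem CategoryTheory.Iso.comp_hom_eq_hom_comp_iff {E : Type u₂} [Category.{v₂} E]
    {P Q P' Q' : E} (e : P ≅ Q) (e' : P' ≅ Q') (u : P ⟶ P') (w : Q ⟶ Q') :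
    u ≫ e'.hom = e.hom ≫ w ↔ w ≫ e'.inv = e.inv ≫ u :=
  ⟨fun h => (CommSq.mk h).vert_inv.w, fun h => (CommSq.vert_inv (g := e.symm) (h := e'.symm) ⟨h⟩).w⟩

def LDC.othIso (L : LDC C) {A B A' B' : C} (e : A ≅ A') (f : B ≅ B') :
    L.ot A B ≅ L.ot A' B' :=
  letI := L.T; MonoidalCategory.tensorIso e f

def LDC.ophIso (L : LDC C) {A B A' B' : C} (e : A ≅ A') (f : B ≅ B') :
    L.op A B ≅ L.op A' B' :=
  letI := L.P; MonoidalCategory.tensorIso e f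

namespace DagData

variable {X : LDC C} (D : DagData X)

def dagIso {A B : C} (e : A ≅ B) : D.dg B ≅ D.dg A := D.dag.mapIso e.op

theorem lamTens_assoc_iff (A B Cc : C) :
    (X.aT (D.dg A) (D.dg B) (D.dg Cc)).inv ≫ X.oth (D.lamTens A B).hom (𝟙 (D.dg Cc))
        ≫ (D.lamTens (X.op A B) Cc).hom
      = X.oth (𝟙 (D.dg A)) (D.lamTens B Cc).hom ≫ (D.lamTens A (X.op B Cc)).hom
          ≫ (D.dagIso (X.aP A B Cc)).hom ↔
    X.oth (D.lamTens A B).hom (𝟙 (D.dg Cc)) ≫ (D.lamTens (X.op A B) Cc).hom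
        ≫ (D.dagIso (X.aP A B Cc)).inv
      = (X.aT (D.dg A) (D.dg B) (D.dg Cc)).hom
          ≫ X.oth (𝟙 (D.dg A)) (D.lamTens B Cc).hom ≫ (D.lamTens A (X.op B Cc)).hom := by
  rw [Iso.inv_comp_eq]
  simp only [← Category.assoc, Iso.comp_inv_eq]

theorem lamPar_assoc_iff (A B Cc : C) :
    (X.aP (D.dg A) (D.dg B) (D.dg Cc)).inv ≫ (X.ophIso (D.lamPar A B) (Iso.refl _)).hom
        ≫ (D.lamPar (X.ot A B) Cc).hom
      = (X.ophIso (Iso.refl _) (D.lamPar B Cc)).hom ≫ (D.lamPar A (X.ot B Cc)).hom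
          ≫ (D.dagIso (X.aT A B Cc)).hom ↔
    (D.lamPar (X.ot A B) Cc).inv ≫ (X.ophIso (D.lamPar A B) (Iso.refl _)).inv
        ≫ (X.aP (D.dg A) (D.dg B) (D.dg Cc)).hom
      = (D.dagIso (X.aT A B Cc)).inv ≫ (D.lamPar A (X.ot B Cc)).inv
          ≫ (X.ophIso (Iso.refl _) (D.lamPar B Cc)).inv := by
  simpa only [Iso.trans_hom, Iso.trans_inv, Iso.symm_hom, Iso.symm_inv, Category.assoc] using
    (Iso.inv_eq_inv ((X.aP _ _ _).symm ≪≫ X.ophIso (D.lamPar A B) (Iso.refl _) ≪≫ D.lamPar _ _)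
      (X.ophIso (Iso.refl _) (D.lamPar B Cc) ≪≫ D.lamPar _ _ ≪≫ D.dagIso (X.aT A B Cc))).symm

theorem lamTop_leftUnitor_iff (A : C) :
    X.oth D.lamTop.hom (𝟙 (D.dg A)) ≫ (D.lamTens X.pu A).hom
      = (X.luT (D.dg A)).hom ≫ (D.dagIso (X.luP A)).hom ↔
    X.oth D.lamTop.hom (𝟙 (D.dg A)) ≫ (D.lamTens X.pu A).hom ≫ (D.dagIso (X.luP A)).inv
      = (X.luT (D.dg A)).hom := by
  rw [← Iso.comp_inv_eq, Category.assoc]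

theorem lamTop_rightUnitor_iff (A : C) :
    X.oth (𝟙 (D.dg A)) D.lamTop.hom ≫ (D.lamTens A X.pu).hom
      = (X.ruT (D.dg A)).hom ≫ (D.dagIso (X.ruP A)).hom ↔
    X.oth (𝟙 (D.dg A)) D.lamTop.hom ≫ (D.lamTens A X.pu).hom ≫ (D.dagIso (X.ruP A)).inv
      = (X.ruT (D.dg A)).hom := by
  rw [← Iso.comp_inv_eq, Category.assoc]

theorem lamBot_leftUnitor_iff (A : C) :
    (X.ophIso D.lamBot (Iso.refl _)).hom ≫ (D.lamPar X.tu A).hom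
      = (X.luP (D.dg A)).hom ≫ (D.dagIso (X.luT A)).hom ↔
    (D.dagIso (X.luT A)).inv
      = (D.lamPar X.tu A).inv ≫ (X.ophIso D.lamBot (Iso.refl _)).inv
          ≫ (X.luP (D.dg A)).hom := by
  rw [Iso.eq_inv_comp, Iso.eq_inv_comp, ← Category.assoc, Iso.comp_inv_eq]

theorem lamBot_rightUnitor_iff (A : C) :
    (X.ophIso (Iso.refl _) D.lamBot).hom ≫ (D.lamPar A X.tu).hom
      = (X.ruP (D.dg A)).hom ≫ (D.dagIso (X.ruT A)).hom ↔
    (D.dagIso (X.ruT A)).inv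
      = (D.lamPar A X.tu).inv ≫ (X.ophIso (Iso.refl _) D.lamBot).inv
          ≫ (X.ruP (D.dg A)).hom := by
  rw [Iso.eq_inv_comp, Iso.eq_inv_comp, ← Category.assoc, Iso.comp_inv_eq]

theorem lamTens_distL_iff (A B Cc : C) :
    X.distL (D.dg A) (D.dg B) (D.dg Cc) ≫ X.oph (D.lamTens A B).hom (𝟙 (D.dg Cc))
        ≫ (D.lamPar (X.op A B) Cc).hom
      = (X.othIso (Iso.refl _) (D.lamPar B Cc)).hom ≫ (D.lamTens A (X.ot B Cc)).hom
          ≫ D.dgm (X.distR A B Cc) ↔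
    (X.othIso (Iso.refl _) (D.lamPar B Cc)).inv ≫ X.distL (D.dg A) (D.dg B) (D.dg Cc)
        ≫ X.oph (D.lamTens A B).hom (𝟙 (D.dg Cc))
      = (D.lamTens A (X.ot B Cc)).hom ≫ D.dgm (X.distR A B Cc)
          ≫ (D.lamPar (X.op A B) Cc).inv := by
  rw [Iso.inv_comp_eq]
  simp only [← Category.assoc, Iso.eq_comp_inv]

theorem lamTens_distR_iff (A B Cc : C) :
    X.distR (D.dg A) (D.dg B) (D.dg Cc) ≫ X.oph (𝟙 (D.dg A)) (D.lamTens B Cc).hom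
        ≫ (D.lamPar A (X.op B Cc)).hom
      = (X.othIso (D.lamPar A B) (Iso.refl _)).hom ≫ (D.lamTens (X.ot A B) Cc).hom
          ≫ D.dgm (X.distL A B Cc) ↔
    (X.othIso (D.lamPar A B) (Iso.refl _)).inv ≫ X.distR (D.dg A) (D.dg B) (D.dg Cc)
        ≫ X.oph (𝟙 (D.dg A)) (D.lamTens B Cc).hom
      = (D.lamTens (X.ot A B) Cc).hom ≫ D.dgm (X.distL A B Cc)
          ≫ (D.lamPar A (X.op B Cc)).inv := by
  rw [Iso.inv_comp_eq]
  simp only [← Category.assoc, Iso.eq_comp_inv]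

theorem invol_tensor_iff (A B : C) :
    (D.invol (X.ot A B)).hom ≫ (D.dagIso (D.lamPar A B)).hom
      = (X.othIso (D.invol A) (D.invol B)).hom ≫ (D.lamTens (D.dg A) (D.dg B)).hom ↔
    (D.lamTens (D.dg A) (D.dg B)).hom ≫ (D.dagIso (D.lamPar A B)).inv
        ≫ (D.invol (X.ot A B)).inv
      = (X.othIso (D.invol A) (D.invol B)).inv := by
  rw [← Category.assoc, Iso.comp_inv_eq, Iso.comp_inv_eq, Category.assoc, Iso.eq_inv_comp,
    eq_comm]

theorem invol_tensorUnit_iff :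
    (D.invol X.tu).hom ≫ (D.dagIso D.lamBot).hom = D.lamTop.hom ↔
    D.lamTop.hom ≫ (D.dagIso D.lamBot).inv ≫ (D.invol X.tu).inv = 𝟙 X.tu := by
  rw [← Category.assoc, Iso.comp_inv_eq, Iso.comp_inv_eq, Category.id_comp, eq_comm]

theorem exists_adjunction_with_involutor_iff :
    (∃ adj : D.dag ⊣ D.dag.rightOp,
        (∀ A : Cᵒᵖ, adj.unit.app A = ((D.invol A.unop).inv).op) ∧
        (∀ A : C, adj.counit.app A = (D.invol A).inv)) ↔
      (∀ {A B : C} (f : A ⟶ B), f ≫ (D.invol B).hom = (D.invol A).hom ≫ D.dgm (D.dgm f)) ∧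
      ∀ A : C, (D.invol (D.dg A)).hom = D.dgm (D.invol A).inv := by
  constructor
  · rintro ⟨adj, hunit, hcounit⟩
    refine ⟨fun {A B} f => (Iso.comp_hom_eq_hom_comp_iff _ _ _ _).mpr ?_, fun A => ?_⟩
    · have naturality := adj.unit.naturality f.op
      rw [hunit, hunit] at naturality
      exact (congrArg Quiver.Hom.unop naturality).symm
    · have triangle := adj.left_triangle_components (op A)
      rw [hunit, hcounit, Iso.comp_inv_eq, Category.id_comp] at triangle
      exact triangle.symm
  · rintro ⟨hnat, hinvol_dag⟩
    have triangle (A : C) : D.dgm (D.invol A).inv ≫ (D.invol (D.dg A)).inv = 𝟙 (D.dg A) := by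
      rw [← hinvol_dag, Iso.hom_inv_id]
    refine ⟨{ unit := { app := fun A => ((D.invol A.unop).inv).op, naturality := ?_ }
              counit := { app := fun A => (D.invol A).inv, naturality := ?_ }
              left_triangle_components := fun A => triangle A.unop
              right_triangle_components := fun A => Quiver.Hom.unop_inj (triangle A) },
      fun _ => rfl, fun _ => rfl⟩
    · intro A B f
      exact Quiver.Hom.unop_inj ((Iso.comp_hom_eq_hom_comp_iff _ _ _ _).mp (hnat f.unop)).symm
    · intro A B f
      exact (Iso.comp_hom_eq_hom_comp_iff _ _ _ _).mp (hnat f)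

end DagData

theorem DagLaws.linearFunctorLaws_frobData {X : LDC C} {D : DagData X} (hD : DagLaws D) :
    LinearFunctorLaws D.frobData := by
  have lamPar_natural {A A' B B' : C} (f : A ⟶ A') (g : B ⟶ B') :=
    (Iso.comp_hom_eq_hom_comp_iff _ _ _ _).mp (hD.lamPar_natural f g)
  have lamTens_assoc (A B Cc : C) := (D.lamTens_assoc_iff A B Cc).mp (hD.ldc1a A B Cc)
  have lamPar_assoc (A B Cc : C) := (D.lamPar_assoc_iff A B Cc).mp (hD.ldc1b A B Cc)
  have lamBot_left (A : C) := (D.lamBot_leftUnitor_iff A).mp (hD.ldc2c A)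
  have lamBot_right (A : C) := (D.lamBot_rightUnitor_iff A).mp (hD.ldc2d A)
  have distL (A B Cc : C) := (D.lamTens_distL_iff A B Cc).mp (hD.ldc3a A B Cc)
  have distR (A B Cc : C) := (D.lamTens_distR_iff A B Cc).mp (hD.ldc3b A B Cc)
  exact
    { mT_natural := fun f g => hD.lamTens_natural f.unop g.unop
      mT_assoc := fun A B Cc => lamTens_assoc A.unop B.unop Cc.unop
      mT_lu := fun A => (D.lamTop_leftUnitor_iff A.unop).mp (hD.ldc2a A.unop)
      mT_ru := fun A => (D.lamTop_rightUnitor_iff A.unop).mp (hD.ldc2b A.unop)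
      nP_natural := fun f g => lamPar_natural f.unop g.unop
      nP_assoc := fun A B Cc => lamPar_assoc A.unop B.unop Cc.unop
      nP_lu := fun A => lamBot_left A.unop
      nP_ru := fun A => lamBot_right A.unop
      vtR_natural := fun f g => lamPar_natural f.unop g.unop
      vtL_natural := fun f g => lamPar_natural f.unop g.unop
      vpR_natural := fun f g => hD.lamTens_natural f.unop g.unop
      vpL_natural := fun f g => hD.lamTens_natural f.unop g.unop
      lf1a := fun A => lamBot_left A.unop
      lf1b := fun A => lamBot_right A.unop
      lf1c := fun A => (Iso.inv_comp_eq _).mpr (hD.ldc2a A.unop)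
      lf1d := fun A => (Iso.inv_comp_eq _).mpr (hD.ldc2b A.unop)
      lf2a := fun A B Cc => (lamPar_assoc A.unop B.unop Cc.unop).symm
      lf2b := fun A B Cc => (lamPar_assoc A.unop B.unop Cc.unop).symm
      lf2c := fun A B Cc => lamTens_assoc A.unop B.unop Cc.unop
      lf2d := fun A B Cc => lamTens_assoc A.unop B.unop Cc.unop
      lf3a := fun A B Cc => (lamPar_assoc A.unop B.unop Cc.unop).symm
      lf3b := fun A B Cc => lamTens_assoc A.unop B.unop Cc.unop
      lf4a := fun A B Cc => distL A.unop B.unop Cc.unop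
      lf4b := fun A B Cc => distR A.unop B.unop Cc.unop
      lf4c := fun A B Cc => distL A.unop B.unop Cc.unop
      lf4d := fun A B Cc => distR A.unop B.unop Cc.unop
      lf5a := fun A B Cc => distL A.unop B.unop Cc.unop
      lf5b := fun A B Cc => distR A.unop B.unop Cc.unop
      lf5c := fun A B Cc => distL A.unop B.unop Cc.unop
      lf5d := fun A B Cc => distR A.unop B.unop Cc.unop }

theorem dagger_ldc_iff_involutive_frobenius_equivalence
    (X : LDC C) (D : DagData X) :
    DagLaws D ↔
      -- (−)† is a Frobenius linear functor Xᵒᵖ → X: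
      (LinearFunctorLaws D.frobData ∧
      -- it is an involutive equivalence: there is an adjunction (−)† ⊣ ((−)†)ᵒᵖ
      -- whose unit and counit are both given by the involutor ι:
      (∃ adj : D.dag ⊣ D.dag.rightOp,
          (∀ A : Cᵒᵖ, adj.unit.app A = ((D.invol A.unop).inv).op) ∧
          (∀ A : C, adj.counit.app A = (D.invol A).inv)) ∧
      -- the unit/counit ι = (ι⁻¹, ι) is a *linear* natural isomorphism, i.e. it is
      -- monoidal and comonoidal with respect to the composite laxors:
      (∀ A B : C,
        (D.lamTens (D.dg A) (D.dg B)).hom ≫ D.dgm ((D.lamPar A B).inv)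
           ≫ (D.invol (X.ot A B)).inv
          = X.oth (D.invol A).inv (D.invol B).inv) ∧
      (∀ A B : C,
        (D.invol (X.op A B)).hom ≫ D.dgm (D.lamTens A B).hom
          = X.oph (D.invol A).hom (D.invol B).hom ≫ (D.lamPar (D.dg A) (D.dg B)).hom) ∧
      (D.lamTop.hom ≫ D.dgm D.lamBot.inv ≫ (D.invol X.tu).inv = 𝟙 X.tu) ∧
      ((D.invol X.pu).hom ≫ D.dgm D.lamTop.hom = D.lamBot.hom)) := by
  constructor
  · intro hD
    exact ⟨hD.linearFunctorLaws_frobData,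
      D.exists_adjunction_with_involutor_iff.mpr ⟨hD.invol_natural, hD.ldc6⟩,
      fun A B => (D.invol_tensor_iff A B).mp (hD.ldc4b A B), hD.ldc4a,
      D.invol_tensorUnit_iff.mp hD.ldc5b, hD.ldc5a⟩
  · rintro ⟨lf, hadj, hinvol_tensor, hinvol_par, hinvol_tensorUnit, hinvol_parUnit⟩
    obtain ⟨hinvol_natural, hinvol_dag⟩ := D.exists_adjunction_with_involutor_iff.mp hadj
    exact
      { lamTens_natural := fun f g => lf.mT_natural f.op g.op
        lamPar_natural := fun f g =>
          (Iso.comp_hom_eq_hom_comp_iff _ _ _ _).mpr (lf.nP_natural f.op g.op)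
        invol_natural := hinvol_natural
        ldc1a := fun A B Cc => (D.lamTens_assoc_iff A B Cc).mpr (lf.mT_assoc (op A) (op B) (op Cc))
        ldc1b := fun A B Cc => (D.lamPar_assoc_iff A B Cc).mpr (lf.nP_assoc (op A) (op B) (op Cc))
        ldc2a := fun A => (D.lamTop_leftUnitor_iff A).mpr (lf.mT_lu (op A))
        ldc2b := fun A => (D.lamTop_rightUnitor_iff A).mpr (lf.mT_ru (op A))
        ldc2c := fun A => (D.lamBot_leftUnitor_iff A).mpr (lf.nP_lu (op A))
        ldc2d := fun A => (D.lamBot_rightUnitor_iff A).mpr (lf.nP_ru (op A))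
        ldc3a := fun A B Cc => (D.lamTens_distL_iff A B Cc).mpr (lf.lf4a (op A) (op B) (op Cc))
        ldc3b := fun A B Cc => (D.lamTens_distR_iff A B Cc).mpr (lf.lf4b (op A) (op B) (op Cc))
        ldc4a := hinvol_par
        ldc4b := fun A B => (D.invol_tensor_iff A B).mpr (hinvol_tensor A B)
        ldc5a := hinvol_parUnit
        ldc5b := D.invol_tensorUnit_iff.mpr hinvol_tensorUnit
        ldc6 := hinvol_dag }

end Stmt8
end
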